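/- arXiv:math/0103031 — 2 statements merged into one kernel-verified Lean document; each statement's English description precedes it below -/
import Mathlib

section
/- Let m ≥ 2 and let w₁, …, wₙ be non-empty words in 𝒜_{k₁}, …, 𝒜_{kₙ} with k₁ ≠ k₂ ≠ … ≠ kₙ (k_i ∈ {1,2}). Then Ψ^{(m)} is multiplicative on such products modulo L^{(m−1)}: (Ψ^{(m)} ∘ j^{(m)})(w₁ ⋯ wₙ) = (Ψ^{(m)} ∘ j_{k₁}^{(m)})(w₁) ⋯ (Ψ^{(m)} ∘ j_{kₙ}^{(m)})(wₙ) (mod L^{(m−1)}). (Lemma 3.2) -/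
open scoped ComplexOrder TensorProduct

/-- `w` is a non-empty word in the generating set `G`. -/
def IsWord {R : Type*} [Monoid R] (G : Set R) (w : R) : Prop :=
  ∃ l : List R, l ≠ [] ∧ (∀ x ∈ l, x ∈ G) ∧ w = l.prod

/-- `φ` is a state on the unital complex *-algebra `R`. -/
def IsState {R : Type*} [Ring R] [Algebra ℂ R] [StarRing R] (φ : R →ₗ[ℂ] ℂ) : Prop :=
  φ 1 = 1 ∧ ∀ x, 0 ≤ φ (x * star x)

/-- The ordered product `f a * f (a+1) * ⋯ * f b` (an empty product if `b < a`). -/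
def ordProd {T : Type*} [Monoid T] (f : ℕ → T) (a b : ℕ) : T :=
  ((List.range' a (b + 1 - a)).map f).prod

/-- The element `t_{[k,m]}`: `g` at the tensor sites `k, …, m` (1-based), with the
convention `t_{[0,m]} = 0`. -/
def tBlock {T : Type*} [Ring T] (g : ℕ → T) (k m : ℕ) : T :=
  if k = 0 then 0 else ordProd g k m

/-- The embedding at tensor site `k` among the sites `1, …, m`, with value `0` out of
range (the convention `i_{m+1,m}(a) = 0`). -/
def embSite {T R : Type*} [Ring T] (e : ℕ → R → T) (m k : ℕ) (x : R) : T :=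
  if 1 ≤ k ∧ k ≤ m then e k x else 0

/-- `φt` is the Boolean extension of the state `φ` to the free product `S = R * ℂ[t]`
(with canonical embedding `ι : R → S` and separator `t`):  one has `φt 1 = 1` and
`φt (t^{e₀} w₁ t^{e₁} ⋯ wₙ t^{eₙ}) = φ(w₁) ⋯ φ(wₙ)` for all non-empty words `wᵢ` in the
generating set `G` and all exponents with `e₁, …, e_{n-1} > 0`. -/
def IsBooleanExt {R S : Type*} [Ring R] [Algebra ℂ R] [Ring S] [Algebra ℂ S]
    (G : Set R) (ι : R → S) (t : S) (φ : R →ₗ[ℂ] ℂ) (φt : S →ₗ[ℂ] ℂ) : Prop :=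
  φt 1 = 1 ∧
  ∀ (n : ℕ) (w : ℕ → R) (e : ℕ → ℕ),
    (∀ i < n, IsWord G (w i)) →
    (∀ i, 0 < i → i < n → 0 < e i) →
    φt (((List.range n).map fun i => t ^ e i * ι (w i)).prod * t ^ e n) =
      ((List.range n).map fun i => φ (w i)).prod

/-! Expanding the defining sums, `j_c(w)` for a word `w` in `G c` is a combination of elementary
tensors whose last site carries `ι(word)` or `1` on side `c` and a positive power of `t` on the
other side. Elementary tensors multiply site by site, so for alternating `k₁ ≠ k₂ ≠ ⋯` the last
sites of the expansion of `j(w₁ ⋯ wₙ)` carry, on each side, words separated by positive powers of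
`t`. The Boolean extensions are multiplicative on such products, and `Ψ^{(m)}` evaluates them only
at the last sites; hence `Ψ^{(m)} ∘ j^{(m)}` is exactly multiplicative on `w₁ ⋯ wₙ`. -/

open Submodule

theorem List.prod_map_mul_prod_map_of_pairwise_commute {M ι : Type*} [Monoid M] {f g : ι → M}
    (h : _root_.Pairwise fun i j => Commute (f i) (g j)) {l : List ι} (hl : l.Nodup) :
    (l.map f).prod * (l.map g).prod = (l.map fun i => f i * g i).prod := by
  induction l with
  | nil => simp
  | cons a l ih =>
    obtain ⟨ha, hl⟩ := List.nodup_cons.1 hl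
    have hc : Commute (l.map f).prod (g a) := Commute.list_prod_left _ _ fun _ hx => by
      obtain ⟨i, hi, rfl⟩ := List.mem_map.1 hx
      exact h fun hia => ha (hia ▸ hi)
    simp only [List.map_cons, List.prod_cons, ← ih hl]
    rw [mul_assoc, ← mul_assoc (l.map f).prod, hc.eq, mul_assoc, mul_assoc]

section OrdProd

variable {M : Type*} [Monoid M]

theorem ordProd_congr {f g : ℕ → M} {a b : ℕ} (h : ∀ l, a ≤ l → l ≤ b → f l = g l) :
    ordProd f a b = ordProd g a b :=
  congrArg List.prod <| List.map_congr_left fun l hl => by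
    rw [List.mem_range'_1] at hl
    exact h l hl.1 (by omega)

theorem ordProd_eq_one {f : ℕ → M} {a b : ℕ} (h : ∀ l, a ≤ l → l ≤ b → f l = 1) :
    ordProd f a b = 1 :=
  (ordProd_congr h).trans (by simp [ordProd])

theorem ordProd_of_le (f : ℕ → M) {a b : ℕ} (h : a ≤ b) :
    ordProd f a b = f a * ordProd f (a + 1) b := by
  rw [ordProd, show b + 1 - a = b + 1 - (a + 1) + 1 by omega, List.range'_succ]
  rfl

theorem ordProd_eq_ordProd_of_eq_one {f : ℕ → M} {a b k : ℕ} (hak : a ≤ k)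
    (h : ∀ l, a ≤ l → l < k → f l = 1) : ordProd f a b = ordProd f k b := by
  induction k, hak using Nat.le_induction with
  | base => rfl
  | succ k hak ih =>
    rw [ih fun l hl hlk => h l hl (by omega)]
    rcases le_or_gt k b with hkb | hbk
    · rw [ordProd_of_le f hkb, h k hak (by omega), one_mul]
    · simp [ordProd, show b + 1 - k = 0 by omega, show b + 1 - (k + 1) = 0 by omega]

theorem ordProd_mul_ordProd {f g : ℕ → M} (h : Pairwise fun l l' => Commute (f l) (g l'))
    (a b : ℕ) : ordProd f a b * ordProd g a b = ordProd (fun l => f l * g l) a b :=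
  List.prod_map_mul_prod_map_of_pairwise_commute h List.nodup_range'

theorem ordProd_commute {f g : ℕ → M} (h : ∀ l l', Commute (f l) (g l')) (a b a' b' : ℕ) :
    Commute (ordProd f a b) (ordProd g a' b') :=
  Commute.list_prod_left _ _ fun _ hx => Commute.list_prod_right _ _ fun _ hy => by
    obtain ⟨l, -, rfl⟩ := List.mem_map.1 hx
    obtain ⟨l', -, rfl⟩ := List.mem_map.1 hy
    exact h l l'

variable {N : Type*} [Monoid N]

theorem ordProd_apply_mulSingle (g : ℕ → N →* M) {a b k : ℕ} (hak : a ≤ k) (hkb : k ≤ b)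
    (x : N) : ordProd (fun l => g l ((Pi.mulSingle k x : ℕ → N) l)) a b = g k x := by
  rw [ordProd_eq_ordProd_of_eq_one hak fun l _ hlk => by rw [Pi.mulSingle_eq_of_ne hlk.ne, map_one],
    ordProd_of_le _ hkb, ordProd_eq_one fun l hl _ => by
      rw [Pi.mulSingle_eq_of_ne (by omega), map_one], Pi.mulSingle_eq_same, mul_one]

end OrdProd

theorem tBlock_eq_ordProd {M N : Type*} [Ring M] [Monoid N] (g : ℕ → N →* M) (x : N) {k : ℕ}
    (hk : 1 ≤ k) (m : ℕ) :
    tBlock (fun l => g l x) k m = ordProd (fun l => g l (if k ≤ l then x else 1)) 1 m := by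
  rw [tBlock, if_neg (by omega), ordProd_eq_ordProd_of_eq_one hk fun l _ hlk => by
    rw [if_neg (by omega), map_one]]
  exact ordProd_congr fun l hl _ => by rw [if_pos hl]

theorem mul_mem_span_of_forall_mul_mem {R A : Type*} [CommSemiring R] [Semiring A] [Algebra R A]
    {S S' S'' : Set A} (h : ∀ s ∈ S, ∀ s' ∈ S', s * s' ∈ S'') {x y : A} (hx : x ∈ span R S)
    (hy : y ∈ span R S') : x * y ∈ span R S'' := by
  have hxy := mul_mem_mul hx hy
  rw [span_mul_span] at hxy
  exact span_mono (Set.mul_subset_iff.2 h) hxy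

theorem map_mul_of_mem_span {R A A' : Type*} [CommSemiring R] [Semiring A] [Algebra R A]
    [Semiring A'] [Algebra R A'] (Ψ : A →ₗ[R] A') {S S' : Set A}
    (h : ∀ s ∈ S, ∀ s' ∈ S', Ψ (s * s') = Ψ s * Ψ s') {x y : A} (hx : x ∈ span R S)
    (hy : y ∈ span R S') : Ψ (x * y) = Ψ x * Ψ y := by
  have hSy : ∀ s ∈ S, Ψ (s * y) = Ψ s * Ψ y := fun s hs =>
    LinearMap.eqOn_span (f := Ψ ∘ₗ LinearMap.mulLeft R s) (g := LinearMap.mulLeft R (Ψ s) ∘ₗ Ψ)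
      (fun s' hs' => h s hs s' hs') hy
  exact LinearMap.eqOn_span (f := Ψ ∘ₗ LinearMap.mulRight R y)
    (g := LinearMap.mulRight R (Ψ y) ∘ₗ Ψ) hSy hx

theorem map_list_prod_of_alternating {M N κ : Type*} [Monoid M] [Monoid N] (Ψ : M → N)
    (V W : κ → Set M) (hΨ1 : Ψ 1 = 1) (hV1 : ∀ c, 1 ∈ V c)
    (hVW : ∀ c c', c' ≠ c → ∀ x ∈ V c, ∀ y ∈ W c, x * y ∈ V c')
    (hΨVW : ∀ c, ∀ x ∈ V c, ∀ y ∈ W c, Ψ (x * y) = Ψ x * Ψ y)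
    {n : ℕ} {k : ℕ → κ} {y : ℕ → M} (hk : ∀ i, i + 1 < n → k i ≠ k (i + 1))
    (hy : ∀ i < n, y i ∈ W (k i)) :
    Ψ ((List.range n).map y).prod = ((List.range n).map fun i => Ψ (y i)).prod := by
  suffices h : ∀ p ≤ n, Ψ ((List.range p).map y).prod = ((List.range p).map fun i => Ψ (y i)).prod
      ∧ (p < n → ((List.range p).map y).prod ∈ V (k p)) from (h n le_rfl).1
  intro p hp
  induction p with
  | zero => exact ⟨by simp [hΨ1], fun _ => by simpa using hV1 (k 0)⟩
  | succ p ih =>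
    obtain ⟨hΨp, hVp⟩ := ih (by omega)
    simp only [List.range_succ, List.map_append, List.map_cons, List.map_nil, List.prod_append,
      List.prod_cons, List.prod_nil, mul_one]
    exact ⟨by rw [hΨVW _ _ (hVp hp) _ (hy p hp), hΨp],
      fun hpn => hVW _ _ (hk p hpn).symm _ (hVp hp) _ (hy p hp)⟩

theorem IsWord.of_mem {R : Type*} [Monoid R] {G : Set R} {a : R} (ha : a ∈ G) : IsWord G a :=
  ⟨[a], List.cons_ne_nil a [], by simpa, (List.prod_singleton).symm⟩

theorem IsWord.mul {R : Type*} [Monoid R] {G : Set R} {a b : R} (ha : IsWord G a)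
    (hb : IsWord G b) : IsWord G (a * b) := by
  obtain ⟨la, hla, hlaG, rfl⟩ := ha
  obtain ⟨lb, -, hlbG, rfl⟩ := hb
  exact ⟨la ++ lb, by simp [hla], fun x hx => (List.mem_append.1 hx).elim (hlaG x) (hlbG x),
    List.prod_append.symm⟩

section BoolMonomial

variable {R S : Type*} [Monoid S] {ι : R → S} {t : S}

/-- The shape of the arguments of `φt` in `IsBooleanExt`. -/
def boolMonomial (ι : R → S) (t : S) (n : ℕ) (w : ℕ → R) (e : ℕ → ℕ) : S :=
  ((List.range n).map fun i => t ^ e i * ι (w i)).prod * t ^ e n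

theorem boolMonomial_mul_pow (ι : R → S) (t : S) (n : ℕ) (w : ℕ → R) (e : ℕ → ℕ) (r : ℕ) :
    boolMonomial ι t n w e * t ^ r = boolMonomial ι t n w (Function.update e n (e n + r)) := by
  rw [boolMonomial, boolMonomial, Function.update_self, pow_add, mul_assoc]
  congr 2
  exact List.map_congr_left fun i hi => by
    rw [Function.update_of_ne (List.mem_range.1 hi).ne]

theorem boolMonomial_mul_apply (ι : R → S) (t : S) (n : ℕ) (w : ℕ → R) (e : ℕ → ℕ) (a : R) :
    boolMonomial ι t n w e * ι a =
      boolMonomial ι t (n + 1) (Function.update w n a) (Function.update e (n + 1) 0) := by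
  have hprefix : ((List.range n).map fun i =>
      t ^ Function.update e (n + 1) 0 i * ι (Function.update w n a i)) =
        (List.range n).map fun i => t ^ e i * ι (w i) :=
    List.map_congr_left fun i hi => by
      have := List.mem_range.1 hi
      rw [Function.update_of_ne (by omega), Function.update_of_ne (by omega)]
  rw [boolMonomial, boolMonomial, List.range_succ, List.map_append, List.prod_append, hprefix]
  simp [Function.update_apply, mul_assoc]

variable [Monoid R] {G : Set R}

def IsBoolMonomialData (G : Set R) (n : ℕ) (w : ℕ → R) (e : ℕ → ℕ) : Prop :=
  (∀ i < n, IsWord G (w i)) ∧ ∀ i, 0 < i → i < n → 0 < e i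

def IsBoolMonomial (G : Set R) (ι : R → S) (t : S) (z : S) : Prop :=
  ∃ n w e, IsBoolMonomialData G n w e ∧ boolMonomial ι t n w e = z

/-- Ends in a positive power of `t` (or is a power of `t`), so that `ι` of a further word stays
separated from the last one. -/
def IsClosedBoolMonomial (G : Set R) (ι : R → S) (t : S) (z : S) : Prop :=
  ∃ n w e, IsBoolMonomialData G n w e ∧ (n = 0 ∨ 0 < e n) ∧ boolMonomial ι t n w e = z

def IsWordOrOne (G : Set R) (ι : R → S) (y : S) : Prop :=
  y = 1 ∨ ∃ a, IsWord G a ∧ ι a = y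

def IsPosPow (t y : S) : Prop :=
  ∃ r, 0 < r ∧ t ^ r = y

theorem IsBoolMonomialData.snoc {n : ℕ} {w : ℕ → R} {e : ℕ → ℕ}
    (hd : IsBoolMonomialData G n w e) (hn : n = 0 ∨ 0 < e n) {a : R} (ha : IsWord G a) :
    IsBoolMonomialData G (n + 1) (Function.update w n a) (Function.update e (n + 1) 0) := by
  refine ⟨fun i hi => ?_, fun i hi hin => ?_⟩
  · rcases eq_or_ne i n with rfl | hin
    · rwa [Function.update_self]
    · rw [Function.update_of_ne hin]
      exact hd.1 i (by omega)
  · rw [Function.update_of_ne (by omega)]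
    rcases eq_or_ne i n with rfl | hin'
    · exact hn.resolve_left (by omega)
    · exact hd.2 i hi (by omega)

theorem IsBoolMonomialData.update_last {n : ℕ} {w : ℕ → R} {e : ℕ → ℕ}
    (hd : IsBoolMonomialData G n w e) (r : ℕ) :
    IsBoolMonomialData G n w (Function.update e n (e n + r)) :=
  ⟨hd.1, fun i hi hin => by rw [Function.update_of_ne hin.ne]; exact hd.2 i hi hin⟩

theorem isClosedBoolMonomial_one : IsClosedBoolMonomial G ι t 1 :=
  ⟨0, fun _ => 1, fun _ => 0, ⟨by simp, by simp⟩, Or.inl rfl, by simp [boolMonomial]⟩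

theorem IsClosedBoolMonomial.isBoolMonomial {z : S} (hz : IsClosedBoolMonomial G ι t z) :
    IsBoolMonomial G ι t z :=
  let ⟨n, w, e, hd, _, hz⟩ := hz
  ⟨n, w, e, hd, hz⟩

theorem IsClosedBoolMonomial.mul_isWordOrOne {z y : S} (hz : IsClosedBoolMonomial G ι t z)
    (hy : IsWordOrOne G ι y) : IsBoolMonomial G ι t (z * y) := by
  rcases hy with rfl | ⟨a, ha, rfl⟩
  · simpa using hz.isBoolMonomial
  obtain ⟨n, w, e, hd, hn, rfl⟩ := hz
  exact ⟨_, _, _, hd.snoc hn ha, (boolMonomial_mul_apply ι t n w e a).symm⟩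

theorem IsBoolMonomial.mul_isPosPow {z y : S} (hz : IsBoolMonomial G ι t z)
    (hy : IsPosPow t y) : IsClosedBoolMonomial G ι t (z * y) := by
  obtain ⟨r, hr, rfl⟩ := hy
  obtain ⟨n, w, e, hd, rfl⟩ := hz
  exact ⟨_, _, _, hd.update_last r, Or.inr (by simp [hr]),
    (boolMonomial_mul_pow ι t n w e r).symm⟩

theorem isWordOrOne_mulSingle {a : R} (ha : a ∈ G) (k l : ℕ) :
    IsWordOrOne G ι ((Pi.mulSingle k (ι a) : ℕ → S) l) := by
  rcases eq_or_ne l k with rfl | hlk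
  · exact Or.inr ⟨a, IsWord.of_mem ha, by rw [Pi.mulSingle_eq_same]⟩
  · exact Or.inl (Pi.mulSingle_eq_of_ne hlk _)

theorem IsWordOrOne.mul {ι : R →* S} {y y' : S} (hy : IsWordOrOne G ι y)
    (hy' : IsWordOrOne G ι y') : IsWordOrOne G ι (y * y') := by
  rcases hy with rfl | ⟨a, ha, rfl⟩
  · simpa using hy'
  rcases hy' with rfl | ⟨b, hb, rfl⟩
  · rw [mul_one]
    exact Or.inr ⟨a, ha, rfl⟩
  exact Or.inr ⟨a * b, ha.mul hb, map_mul ι a b⟩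

theorem IsPosPow.mul {y y' : S} (hy : IsPosPow t y) (hy' : IsPosPow t y') : IsPosPow t (y * y') :=
  let ⟨r, hr, hy⟩ := hy
  let ⟨r', _, hy'⟩ := hy'
  ⟨r + r', by omega, by rw [pow_add, hy, hy']⟩

end BoolMonomial

namespace IsBooleanExt

variable {R S : Type*} [Ring R] [Algebra ℂ R] [Ring S] [Algebra ℂ S] {G : Set R} {ι : R → S}
  {t : S} {φ : R →ₗ[ℂ] ℂ} {φt : S →ₗ[ℂ] ℂ}

theorem apply_boolMonomial (hb : IsBooleanExt G ι t φ φt) {n : ℕ} {w : ℕ → R} {e : ℕ → ℕ}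
    (hd : IsBoolMonomialData G n w e) :
    φt (boolMonomial ι t n w e) = ((List.range n).map fun i => φ (w i)).prod :=
  hb.2 n w e hd.1 hd.2

theorem apply_pow (hb : IsBooleanExt G ι t φ φt) (r : ℕ) : φt (t ^ r) = 1 := by
  simpa [boolMonomial] using
    hb.apply_boolMonomial (n := 0) (w := fun _ => 1) (e := fun _ => r) ⟨by simp, by simp⟩

theorem apply_of_isWord (hb : IsBooleanExt G ι t φ φt) {a : R} (ha : IsWord G a) :
    φt (ι a) = φ a := by
  simpa [boolMonomial] using
    hb.apply_boolMonomial (n := 1) (w := fun _ => a) (e := fun _ => 0) ⟨by simpa, by omega⟩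

theorem map_mul_of_isClosedBoolMonomial (hb : IsBooleanExt G ι t φ φt) {z y : S}
    (hz : IsClosedBoolMonomial G ι t z) (hy : IsWordOrOne G ι y) : φt (z * y) = φt z * φt y := by
  rcases hy with rfl | ⟨a, ha, rfl⟩
  · rw [mul_one, hb.1, mul_one]
  obtain ⟨n, w, e, hd, hn, rfl⟩ := hz
  rw [boolMonomial_mul_apply, hb.apply_boolMonomial (hd.snoc hn ha), hb.apply_boolMonomial hd,
    hb.apply_of_isWord ha, List.range_succ, List.map_append, List.prod_append]
  simp only [List.map_cons, List.map_nil, List.prod_cons, List.prod_nil, mul_one,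
    Function.update_self]
  congr 2
  exact List.map_congr_left fun i hi => by rw [Function.update_of_ne (List.mem_range.1 hi).ne]

theorem map_mul_of_isPosPow (hb : IsBooleanExt G ι t φ φt) {z y : S}
    (hz : IsBoolMonomial G ι t z) (hy : IsPosPow t y) : φt (z * y) = φt z * φt y := by
  obtain ⟨r, -, rfl⟩ := hy
  obtain ⟨n, w, e, hd, rfl⟩ := hz
  rw [boolMonomial_mul_pow, hb.apply_boolMonomial (hd.update_last r), hb.apply_boolMonomial hd,
    hb.apply_pow, mul_one]

end IsBooleanExt

section ElemTensor

variable {B : Fin 2 → Type*} [∀ i, Monoid (B i)] {T : Type*} [Monoid T]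

def SitesCommute (e : ∀ i, ℕ → B i →* T) : Prop :=
  ∀ (i i' : Fin 2) (k k' : ℕ), (i, k) ≠ (i', k') → ∀ (x : B i) (y : B i'),
    Commute (e i k x) (e i' k' y)

/-- The elementary tensor `x₀ 1 ⊗ ⋯ ⊗ x₀ m ⊗ x₁ 1 ⊗ ⋯ ⊗ x₁ m`. -/
def elemTensor (e : ∀ i, ℕ → B i →* T) (m : ℕ) (x₀ : ℕ → B 0) (x₁ : ℕ → B 1) : T :=
  ordProd (fun l => e 0 l (x₀ l)) 1 m * ordProd (fun l => e 1 l (x₁ l)) 1 m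

def elemTensors (e : ∀ i, ℕ → B i →* T) (m : ℕ) (P₀ : B 0 → Prop) (P₁ : B 1 → Prop) : Set T :=
  {z | ∃ x₀ x₁, P₀ (x₀ m) ∧ P₁ (x₁ m) ∧ elemTensor e m x₀ x₁ = z}

variable {e : ∀ i, ℕ → B i →* T}

theorem elemTensor_one (e : ∀ i, ℕ → B i →* T) (m : ℕ) : elemTensor e m 1 1 = 1 := by
  simp only [elemTensor, Pi.one_apply, map_one]
  rw [ordProd_eq_one fun _ _ _ => rfl, one_mul]

theorem elemTensor_mul_elemTensor (hcomm : SitesCommute e) (m : ℕ) (x₀ y₀ : ℕ → B 0)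
    (x₁ y₁ : ℕ → B 1) :
    elemTensor e m x₀ x₁ * elemTensor e m y₀ y₁ = elemTensor e m (x₀ * y₀) (x₁ * y₁) := by
  have hsame : ∀ i (x y : ℕ → B i), ordProd (fun l => e i l (x l)) 1 m *
      ordProd (fun l => e i l (y l)) 1 m = ordProd (fun l => e i l ((x * y) l)) 1 m := by
    intro i x y
    simp only [Pi.mul_apply, map_mul]
    exact ordProd_mul_ordProd (fun l l' hll' => hcomm i i l l' (by simpa using hll') _ _) 1 m
  have hcross := ordProd_commute (fun l l' => (hcomm 0 1 l' l (by simp) (y₀ l') (x₁ l)).symm)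
    1 m 1 m
  rw [elemTensor, elemTensor, elemTensor, mul_assoc,
    ← mul_assoc (ordProd (fun l => e 1 l (x₁ l)) 1 m), hcross.eq,
    mul_assoc, ← mul_assoc, hsame, hsame]

end ElemTensor

theorem mul_mem_span_elemTensors {B : Fin 2 → Type*} [∀ i, Monoid (B i)] {T : Type*} [Ring T]
    [Algebra ℂ T] {e : ∀ i, ℕ → B i →* T} (hcomm : SitesCommute e) {m : ℕ}
    {P₀ Q₀ R₀ : B 0 → Prop} {P₁ Q₁ R₁ : B 1 → Prop}
    (h₀ : ∀ a b, P₀ a → Q₀ b → R₀ (a * b)) (h₁ : ∀ a b, P₁ a → Q₁ b → R₁ (a * b)) {x y : T}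
    (hx : x ∈ span ℂ (elemTensors e m P₀ P₁)) (hy : y ∈ span ℂ (elemTensors e m Q₀ Q₁)) :
    x * y ∈ span ℂ (elemTensors e m R₀ R₁) := by
  refine mul_mem_span_of_forall_mul_mem ?_ hx hy
  rintro _ ⟨x₀, x₁, hx₀, hx₁, rfl⟩ _ ⟨y₀, y₁, hy₀, hy₁, rfl⟩
  exact ⟨x₀ * y₀, x₁ * y₁, h₀ _ _ hx₀ hy₀, h₁ _ _ hx₁ hy₁,
    (elemTensor_mul_elemTensor hcomm m x₀ y₀ x₁ y₁).symm⟩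

section ConditionMap

variable {B : Fin 2 → Type*} [∀ i, Semiring (B i)] [∀ i, Module ℂ (B i)]
  {T T' : Type*} [Ring T] [Algebra ℂ T] [Ring T'] [Algebra ℂ T']
  {e : ∀ i, ℕ → B i →* T} {f : ∀ i, ℕ → B i →* T'} {m : ℕ} {ψt : ∀ i, B i →ₗ[ℂ] ℂ}
  {Ψ : T →ₗ[ℂ] T'}

def IsConditionMap (e : ∀ i, ℕ → B i →* T) (f : ∀ i, ℕ → B i →* T') (m : ℕ)
    (ψt : ∀ i, B i →ₗ[ℂ] ℂ) (Ψ : T →ₗ[ℂ] T') : Prop :=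
  ∀ x₀ x₁, Ψ (elemTensor e m x₀ x₁) = (ψt 0 (x₀ m) * ψt 1 (x₁ m)) • elemTensor f (m - 1) x₀ x₁

theorem IsConditionMap.map_one (hΨ : IsConditionMap e f m ψt Ψ) (h1 : ∀ i, ψt i 1 = 1) :
    Ψ 1 = 1 := by
  rw [← elemTensor_one e m, hΨ, Pi.one_apply, Pi.one_apply, h1, h1, elemTensor_one, one_mul,
    one_smul]

theorem IsConditionMap.map_elemTensor_mul_elemTensor (hΨ : IsConditionMap e f m ψt Ψ)
    (hcomm : SitesCommute e) (hcomm' : SitesCommute f) {x₀ y₀ : ℕ → B 0} {x₁ y₁ : ℕ → B 1}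
    (h₀ : ψt 0 (x₀ m * y₀ m) = ψt 0 (x₀ m) * ψt 0 (y₀ m))
    (h₁ : ψt 1 (x₁ m * y₁ m) = ψt 1 (x₁ m) * ψt 1 (y₁ m)) :
    Ψ (elemTensor e m x₀ x₁ * elemTensor e m y₀ y₁) =
      Ψ (elemTensor e m x₀ x₁) * Ψ (elemTensor e m y₀ y₁) := by
  rw [elemTensor_mul_elemTensor hcomm, hΨ, hΨ, hΨ, smul_mul_smul_comm,
    elemTensor_mul_elemTensor hcomm', Pi.mul_apply, Pi.mul_apply, h₀, h₁, mul_mul_mul_comm]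

theorem IsConditionMap.map_mul_of_mem_span_elemTensors (hΨ : IsConditionMap e f m ψt Ψ)
    (hcomm : SitesCommute e) (hcomm' : SitesCommute f) {P₀ Q₀ : B 0 → Prop} {P₁ Q₁ : B 1 → Prop}
    (h₀ : ∀ a b, P₀ a → Q₀ b → ψt 0 (a * b) = ψt 0 a * ψt 0 b)
    (h₁ : ∀ a b, P₁ a → Q₁ b → ψt 1 (a * b) = ψt 1 a * ψt 1 b) {x y : T}
    (hx : x ∈ span ℂ (elemTensors e m P₀ P₁)) (hy : y ∈ span ℂ (elemTensors e m Q₀ Q₁)) :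
    Ψ (x * y) = Ψ x * Ψ y := by
  refine map_mul_of_mem_span Ψ ?_ hx hy
  rintro _ ⟨x₀, x₁, hx₀, hx₁, rfl⟩ _ ⟨y₀, y₁, hy₀, hy₁, rfl⟩
  exact hΨ.map_elemTensor_mul_elemTensor hcomm hcomm' (h₀ _ _ hx₀ hy₀) (h₁ _ _ hx₁ hy₁)

end ConditionMap

section

variable {A B : Fin 2 → Type*} [∀ i, Monoid (A i)] [∀ i, Monoid (B i)] {T : Type*} [Monoid T]
  (G : ∀ i, Set (A i)) (ι : ∀ i, A i →* B i) (t : ∀ i, B i) (e : ∀ i, ℕ → B i →* T) (m : ℕ)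

/-- The elementary tensors that may be multiplied on the right by `j c` of a word: on side `c`
the last site must be ready to receive a word. -/
def admissibleTensors : Fin 2 → Set T :=
  ![elemTensors e m (IsClosedBoolMonomial (G 0) (ι 0) (t 0)) (IsBoolMonomial (G 1) (ι 1) (t 1)),
    elemTensors e m (IsBoolMonomial (G 0) (ι 0) (t 0)) (IsClosedBoolMonomial (G 1) (ι 1) (t 1))]

def wordTensors : Fin 2 → Set T :=
  ![elemTensors e m (IsWordOrOne (G 0) (ι 0)) (IsPosPow (t 1)),
    elemTensors e m (IsPosPow (t 0)) (IsWordOrOne (G 1) (ι 1))]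

end

section

variable {A B : Fin 2 → Type*} [∀ i, Monoid (A i)] [∀ i, Monoid (B i)] {T : Type*} [Ring T]
  [Algebra ℂ T] {G : ∀ i, Set (A i)} {ι : ∀ i, A i →* B i} {t : ∀ i, B i}
  {e : ∀ i, ℕ → B i →* T} {m : ℕ}

theorem one_mem_span_admissibleTensors (c : Fin 2) :
    1 ∈ span ℂ (admissibleTensors G ι t e m c) := by
  refine subset_span ?_
  fin_cases c
  · exact ⟨1, 1, isClosedBoolMonomial_one, isClosedBoolMonomial_one.isBoolMonomial,
      elemTensor_one e m⟩
  · exact ⟨1, 1, isClosedBoolMonomial_one.isBoolMonomial, isClosedBoolMonomial_one,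
      elemTensor_one e m⟩

theorem mul_mem_span_admissibleTensors (hcomm : SitesCommute e) {c c' : Fin 2} (hc : c' ≠ c)
    {x y : T} (hx : x ∈ span ℂ (admissibleTensors G ι t e m c))
    (hy : y ∈ span ℂ (wordTensors G ι t e m c)) :
    x * y ∈ span ℂ (admissibleTensors G ι t e m c') := by
  obtain ⟨rfl, rfl⟩ | ⟨rfl, rfl⟩ : c = 0 ∧ c' = 1 ∨ c = 1 ∧ c' = 0 := by omega
  · exact mul_mem_span_elemTensors hcomm (fun _ _ => IsClosedBoolMonomial.mul_isWordOrOne)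
      (fun _ _ => IsBoolMonomial.mul_isPosPow) hx hy
  · exact mul_mem_span_elemTensors hcomm (fun _ _ => IsBoolMonomial.mul_isPosPow)
      (fun _ _ => IsClosedBoolMonomial.mul_isWordOrOne) hx hy

theorem mul_mem_span_wordTensors (hcomm : SitesCommute e) {c : Fin 2} {x y : T}
    (hx : x ∈ span ℂ (wordTensors G ι t e m c)) (hy : y ∈ span ℂ (wordTensors G ι t e m c)) :
    x * y ∈ span ℂ (wordTensors G ι t e m c) := by
  fin_cases c
  · exact mul_mem_span_elemTensors hcomm (fun _ _ => IsWordOrOne.mul) (fun _ _ => IsPosPow.mul)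
      hx hy
  · exact mul_mem_span_elemTensors hcomm (fun _ _ => IsPosPow.mul) (fun _ _ => IsWordOrOne.mul)
      hx hy

theorem mem_span_wordTensors_of_isWord (hcomm : SitesCommute e) (j : ∀ i, A i →* T)
    (hgen : ∀ c, ∀ a ∈ G c, j c a ∈ span ℂ (wordTensors G ι t e m c)) {c : Fin 2} {a : A c}
    (ha : IsWord (G c) a) : j c a ∈ span ℂ (wordTensors G ι t e m c) := by
  obtain ⟨l, hl, hlG, rfl⟩ := ha
  rw [map_list_prod]
  induction l with
  | nil => exact absurd rfl hl
  | cons x l ih =>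
    rw [List.map_cons, List.prod_cons]
    rcases eq_or_ne l [] with rfl | hl'
    · simpa using hgen c x (hlG x List.mem_cons_self)
    · exact mul_mem_span_wordTensors hcomm (hgen c x (hlG x List.mem_cons_self))
        (ih hl' fun y hy => hlG y (List.mem_cons_of_mem x hy))

theorem sum_embSite_sub_mul_tBlock_mem_span_wordTensors {a : A 0} (ha : a ∈ G 0) :
    ∑ k ∈ Finset.Icc 1 m, (embSite (fun l x => e 0 l x) m k (ι 0 a) -
        embSite (fun l x => e 0 l x) m (k + 1) (ι 0 a)) * tBlock (fun l => e 1 l (t 1)) k m ∈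
      span ℂ (wordTensors G ι t e m 0) := by
  refine sum_mem fun k hk => ?_
  obtain ⟨hk1, hkm⟩ := Finset.mem_Icc.1 hk
  have hterm : ∀ k', embSite (fun l x => e 0 l x) m k' (ι 0 a) *
      tBlock (fun l => e 1 l (t 1)) k m ∈ span ℂ (wordTensors G ι t e m 0) := fun k' => by
    unfold embSite
    split_ifs with hk'
    · dsimp only
      rw [← ordProd_apply_mulSingle (e 0) hk'.1 hk'.2, tBlock_eq_ordProd (e 1) (t 1) hk1]
      exact subset_span ⟨_, _, isWordOrOne_mulSingle ha k' m,
        ⟨1, one_pos, by rw [if_pos hkm, pow_one]⟩, rfl⟩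
    · rw [zero_mul]
      exact zero_mem _
  rw [sub_mul]
  exact sub_mem (hterm k) (hterm (k + 1))

theorem sum_tBlock_mul_embSite_sub_mem_span_wordTensors {b : A 1} (hb : b ∈ G 1) :
    ∑ k ∈ Finset.Icc 1 m, tBlock (fun l => e 0 l (t 0)) k m *
        (embSite (fun l x => e 1 l x) m k (ι 1 b) -
          embSite (fun l x => e 1 l x) m (k + 1) (ι 1 b)) ∈
      span ℂ (wordTensors G ι t e m 1) := by
  refine sum_mem fun k hk => ?_
  obtain ⟨hk1, hkm⟩ := Finset.mem_Icc.1 hk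
  have hterm : ∀ k', tBlock (fun l => e 0 l (t 0)) k m *
      embSite (fun l x => e 1 l x) m k' (ι 1 b) ∈ span ℂ (wordTensors G ι t e m 1) := fun k' => by
    unfold embSite
    split_ifs with hk'
    · dsimp only
      rw [← ordProd_apply_mulSingle (e 1) hk'.1 hk'.2, tBlock_eq_ordProd (e 0) (t 0) hk1]
      exact subset_span ⟨_, _, ⟨1, one_pos, by rw [if_pos hkm, pow_one]⟩,
        isWordOrOne_mulSingle hb k' m, rfl⟩
    · rw [mul_zero]
      exact zero_mem _
  rw [mul_sub]
  exact sub_mem (hterm k) (hterm (k + 1))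

end

theorem IsConditionMap.map_mul_of_mem_span_admissibleTensors {A B : Fin 2 → Type*}
    [∀ i, Ring (A i)] [∀ i, Algebra ℂ (A i)] [∀ i, Ring (B i)] [∀ i, Algebra ℂ (B i)]
    {T T' : Type*} [Ring T] [Algebra ℂ T] [Ring T'] [Algebra ℂ T'] {G : ∀ i, Set (A i)}
    {ι : ∀ i, A i →* B i} {t : ∀ i, B i} {e : ∀ i, ℕ → B i →* T} {f : ∀ i, ℕ → B i →* T'}
    {m : ℕ} {ψ : ∀ i, A i →ₗ[ℂ] ℂ} {ψt : ∀ i, B i →ₗ[ℂ] ℂ} {Ψ : T →ₗ[ℂ] T'}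
    (hΨ : IsConditionMap e f m ψt Ψ) (hcomm : SitesCommute e) (hcomm' : SitesCommute f)
    (hψt : ∀ i, IsBooleanExt (G i) (ι i) (t i) (ψ i) (ψt i)) {c : Fin 2} {x y : T}
    (hx : x ∈ span ℂ (admissibleTensors G ι t e m c))
    (hy : y ∈ span ℂ (wordTensors G ι t e m c)) : Ψ (x * y) = Ψ x * Ψ y := by
  fin_cases c
  · exact hΨ.map_mul_of_mem_span_elemTensors hcomm hcomm'
      (fun _ _ => (hψt 0).map_mul_of_isClosedBoolMonomial)
      (fun _ _ => (hψt 1).map_mul_of_isPosPow) hx hy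
  · exact hΨ.map_mul_of_mem_span_elemTensors hcomm hcomm'
      (fun _ _ => (hψt 0).map_mul_of_isPosPow)
      (fun _ _ => (hψt 1).map_mul_of_isClosedBoolMonomial) hx hy

/- `A i`, `B i` model `𝒜ᵢ₊₁` and `𝒜̃ᵢ₊₁ = 𝒜ᵢ₊₁ * ℂ[t]` (embedding `ι i`, separator `t i`);
`T`, `T'` model `𝒜̃^{(m)}`, `𝒜̃^{(m-1)}`, with site embeddings `e i k`, `f i k`. -/
theorem condition_map_multiplicative_mod_ideal_general
    {A B : Fin 2 → Type*} {T T' : Type*}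
    [∀ i, Ring (A i)] [∀ i, Algebra ℂ (A i)] [∀ i, StarRing (A i)]
    [∀ i, Ring (B i)] [∀ i, Algebra ℂ (B i)] [∀ i, StarRing (B i)]
    [Ring T] [Algebra ℂ T] [StarRing T]
    [Ring T'] [Algebra ℂ T'] [StarRing T']
    (G : ∀ i, Set (A i))
    (ι : ∀ i, A i →⋆ₐ[ℂ] B i) (t : ∀ i, B i)
    (m : ℕ)
    (e : ∀ i, ℕ → B i →⋆ₐ[ℂ] T)
    (hcomm : ∀ (i i' : Fin 2) (k k' : ℕ), (i, k) ≠ (i', k') →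
      ∀ (x : B i) (y : B i'), Commute (e i k x) (e i' k' y))
    (f : ∀ i, ℕ → B i →⋆ₐ[ℂ] T')
    (hcomm' : ∀ (i i' : Fin 2) (k k' : ℕ), (i, k) ≠ (i', k') →
      ∀ (x : B i) (y : B i'), Commute (f i k x) (f i' k' y))
    -- the states `ψᵢ` and their Boolean extensions `ψt i`
    (ψ : ∀ i, A i →ₗ[ℂ] ℂ)
    (ψt : ∀ i, B i →ₗ[ℂ] ℂ)
    (hψt : ∀ i, IsBooleanExt (G i) (⇑(ι i)) (t i) (ψ i) (ψt i))
    -- the condition map `Ψ^{(m)} = id^{⊗(m-1)} ⊗ ψ̃₁ ⊗ id^{⊗(m-1)} ⊗ ψ̃₂`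
    (Ψ : T →ₗ[ℂ] T')
    (hΨ : ∀ (x : ℕ → B 0) (y : ℕ → B 1),
      Ψ (ordProd (fun k => e 0 k (x k)) 1 m * ordProd (fun k => e 1 k (y k)) 1 m) =
        (ψt 0 (x m) * ψt 1 (y m)) •
          (ordProd (fun k => f 0 k (x k)) 1 (m - 1) * ordProd (fun k => f 1 k (y k)) 1 (m - 1)))
    -- the *-homomorphism `j^{(m)}`
    (j : ∀ i, A i →⋆ₐ[ℂ] T)
    (hj1 : ∀ a ∈ G 0, j 0 a = ∑ k ∈ Finset.Icc 1 m,
      (embSite (fun l x => e 0 l x) m k (ι 0 a) - embSite (fun l x => e 0 l x) m (k + 1) (ι 0 a)) *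
        tBlock (fun l => e 1 l (t 1)) k m)
    (hj2 : ∀ b ∈ G 1, j 1 b = ∑ k ∈ Finset.Icc 1 m,
      tBlock (fun l => e 0 l (t 0)) k m *
        (embSite (fun l x => e 1 l x) m k (ι 1 b) - embSite (fun l x => e 1 l x) m (k + 1) (ι 1 b)))
    -- the two-sided *-ideal `L^{(m-1)}`
    (L' : TwoSidedIdeal T')
    -- non-empty words `w i` in `𝒜_{k i}`, with consecutive indices distinct
    (n : ℕ) (k : ℕ → Fin 2) (w : ∀ i, A (k i))
    (hk : ∀ i, i + 1 < n → k i ≠ k (i + 1))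
    (hw : ∀ i < n, IsWord (G (k i)) (w i)) :
    -- `(Ψ^{(m)} ∘ j^{(m)})(w₁ ⋯ wₙ)
    --    = (Ψ^{(m)} ∘ j_{k₁}^{(m)})(w₁) ⋯ (Ψ^{(m)} ∘ j_{kₙ}^{(m)})(wₙ)  (mod L^{(m-1)})`
    Ψ (((List.range n).map fun i => j (k i) (w i)).prod) -
        ((List.range n).map fun i => Ψ (j (k i) (w i))).prod ∈ L' := by
  let ι' : ∀ i, A i →* B i := fun i => ι i
  let e' : ∀ i, ℕ → B i →* T := fun i l => e i l
  let f' : ∀ i, ℕ → B i →* T' := fun i l => f i l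
  have hΨ' : IsConditionMap e' f' m ψt Ψ := hΨ
  have hgen : ∀ c, ∀ a ∈ G c, j c a ∈ span ℂ (wordTensors G ι' t e' m c) := by
    intro c a ha
    fin_cases c
    · exact (hj1 a ha).symm ▸ sum_embSite_sub_mul_tBlock_mem_span_wordTensors ha
    · exact (hj2 a ha).symm ▸ sum_tBlock_mul_embSite_sub_mem_span_wordTensors ha
  have hmul : Ψ (((List.range n).map fun i => j (k i) (w i)).prod) =
      ((List.range n).map fun i => Ψ (j (k i) (w i))).prod :=
    map_list_prod_of_alternating Ψ (fun c => span ℂ (admissibleTensors G ι' t e' m c))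
      (fun c => span ℂ (wordTensors G ι' t e' m c)) (hΨ'.map_one fun i => (hψt i).1)
      one_mem_span_admissibleTensors
      (fun _ _ hc _ hx _ hy => mul_mem_span_admissibleTensors hcomm hc hx hy)
      (fun _ _ hx _ hy => hΨ'.map_mul_of_mem_span_admissibleTensors hcomm hcomm' hψt hx hy) hk
      fun i hi => mem_span_wordTensors_of_isWord hcomm (fun i => j i) hgen (hw i hi)
  rw [hmul, sub_self]
  exact L'.zero_mem

theorem condition_map_multiplicative_mod_ideal
    {A B : Fin 2 → Type*} {T T' : Type*}
    [∀ i, Ring (A i)] [∀ i, Algebra ℂ (A i)] [∀ i, StarRing (A i)] [∀ i, StarModule ℂ (A i)]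
    [∀ i, Ring (B i)] [∀ i, Algebra ℂ (B i)] [∀ i, StarRing (B i)] [∀ i, StarModule ℂ (B i)]
    [Ring T] [Algebra ℂ T] [StarRing T] [StarModule ℂ T]
    [Ring T'] [Algebra ℂ T'] [StarRing T'] [StarModule ℂ T']
    (G : ∀ i, Set (A i)) (hG : ∀ i, ∀ x ∈ G i, star x ∈ G i)
    (hA : ∀ i, Algebra.adjoin ℂ (G i) = ⊤)
    (ι : ∀ i, A i →⋆ₐ[ℂ] B i) (t : ∀ i, B i) (ht : ∀ i, star (t i) = t i)
    (hB : ∀ i, Algebra.adjoin ℂ (Set.range (ι i) ∪ {t i}) = ⊤)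
    (m : ℕ) (hm : 2 ≤ m)
    (e : ∀ i, ℕ → B i →⋆ₐ[ℂ] T)
    (hcomm : ∀ (i i' : Fin 2) (k k' : ℕ), (i, k) ≠ (i', k') →
      ∀ (x : B i) (y : B i'), Commute (e i k x) (e i' k' y))
    (hT : Algebra.adjoin ℂ
      {x : T | ∃ (i : Fin 2) (k : ℕ), 1 ≤ k ∧ k ≤ m ∧ ∃ b : B i, x = e i k b} = ⊤)
    (f : ∀ i, ℕ → B i →⋆ₐ[ℂ] T')
    (hcomm' : ∀ (i i' : Fin 2) (k k' : ℕ), (i, k) ≠ (i', k') →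
      ∀ (x : B i) (y : B i'), Commute (f i k x) (f i' k' y))
    (hT' : Algebra.adjoin ℂ
      {x : T' | ∃ (i : Fin 2) (k : ℕ), 1 ≤ k ∧ k ≤ m - 1 ∧ ∃ b : B i, x = f i k b} = ⊤)
    -- the states `ψᵢ` and their Boolean extensions `ψt i`
    (ψ : ∀ i, A i →ₗ[ℂ] ℂ) (hψ : ∀ i, IsState (ψ i))
    (ψt : ∀ i, B i →ₗ[ℂ] ℂ)
    (hψt : ∀ i, IsBooleanExt (G i) (⇑(ι i)) (t i) (ψ i) (ψt i))
    -- the condition map `Ψ^{(m)} = id^{⊗(m-1)} ⊗ ψ̃₁ ⊗ id^{⊗(m-1)} ⊗ ψ̃₂`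
    (Ψ : T →ₗ[ℂ] T')
    (hΨ : ∀ (x : ℕ → B 0) (y : ℕ → B 1),
      Ψ (ordProd (fun k => e 0 k (x k)) 1 m * ordProd (fun k => e 1 k (y k)) 1 m) =
        (ψt 0 (x m) * ψt 1 (y m)) •
          (ordProd (fun k => f 0 k (x k)) 1 (m - 1) * ordProd (fun k => f 1 k (y k)) 1 (m - 1)))
    -- the *-homomorphism `j^{(m)}`
    (j : ∀ i, A i →⋆ₐ[ℂ] T)
    (hj1 : ∀ a ∈ G 0, j 0 a = ∑ k ∈ Finset.Icc 1 m,
      (embSite (fun l x => e 0 l x) m k (ι 0 a) - embSite (fun l x => e 0 l x) m (k + 1) (ι 0 a)) *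
        tBlock (fun l => e 1 l (t 1)) k m)
    (hj2 : ∀ b ∈ G 1, j 1 b = ∑ k ∈ Finset.Icc 1 m,
      tBlock (fun l => e 0 l (t 0)) k m *
        (embSite (fun l x => e 1 l x) m k (ι 1 b) - embSite (fun l x => e 1 l x) m (k + 1) (ι 1 b)))
    -- the two-sided *-ideal `L^{(m-1)}`
    (L' : TwoSidedIdeal T')
    (hL' : L' = TwoSidedIdeal.span
      {x : T' | ∃ (i : Fin 2) (k : ℕ), 1 ≤ k ∧ k ≤ m - 1 ∧ x = f i k (t i * (1 - t i))})
    -- non-empty words `w i` in `𝒜_{k i}`, with consecutive indices distinct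
    (n : ℕ) (k : ℕ → Fin 2) (w : ∀ i, A (k i))
    (hk : ∀ i, i + 1 < n → k i ≠ k (i + 1))
    (hw : ∀ i < n, IsWord (G (k i)) (w i)) :
    -- `(Ψ^{(m)} ∘ j^{(m)})(w₁ ⋯ wₙ)
    --    = (Ψ^{(m)} ∘ j_{k₁}^{(m)})(w₁) ⋯ (Ψ^{(m)} ∘ j_{kₙ}^{(m)})(wₙ)  (mod L^{(m-1)})`
    Ψ (((List.range n).map fun i => j (k i) (w i)).prod) -
        ((List.range n).map fun i => Ψ (j (k i) (w i))).prod ∈ L' :=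
  condition_map_multiplicative_mod_ideal_general G ι t m e hcomm f hcomm' ψ ψt hψt Ψ hΨ j hj1 hj2 L'
    n k w hk hw
end

section
/- For every N ≥ 2 one has ĵ_N^{(m)} ∘ δ_N = Δ_{N−1}^{(m)} ∘ î₁ as maps 𝒜 → (𝒜̃^{*(m)})^{⊗N}, where δ_N is the N-th iteration of δ and Δ_{N−1}^{(m)} is the (N−1)-th iteration of the coproduct Δ^{(m)} defined recursively by Δ₁^{(m)} = Δ^{(m)} and Δ_k^{(m)} = (id ⊗ Δ_{k−1}^{(m)}) ∘ Δ^{(m)}. (Corollary 5.3) -/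
/-!
Both sides are algebra homomorphisms, so it suffices to compare them on a generator `a ∈ 𝒢`.
There `a_{(1)} = Σ_k (a_{(k)} - a_{(k+1)})` telescopes (as `a_{(m+1)} = 0`), and each summand
`d` is skew-primitive for the group-like element `T = t_{[k,m]}`: `Δ d = d ⊗ T + T ⊗ d`.
By induction on `n`, the `n`-th iterated coproduct of such a `d` is the sum over the `n + 1`
positions of the pure tensor with `d` at that position and `T` elsewhere. Exchanging the sums
over `k` and over the position gives `Σ_i ĵ(a^{(i)}) = ĵ(δ_N a)`.
-/

open scoped ComplexOrder TensorProduct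

/-- The pure tensor `f 0 ⊗ f 1 ⊗ ⋯ ⊗ f n` in the iterated (right-nested) tensor power
`TP n = C ⊗ (C ⊗ (⋯ ⊗ C))` (with `n + 1` factors), presented through the structure
isomorphisms `e0 : TP 0 ≃ C` and `eS n : TP (n+1) ≃ C ⊗ TP n`. -/
noncomputable def pureTensor {C : Type*} [Ring C] [Algebra ℂ C] {TP : ℕ → Type*}
    [∀ n, Ring (TP n)] [∀ n, Algebra ℂ (TP n)]
    (e0 : TP 0 ≃ₐ[ℂ] C) (eS : ∀ n, TP (n + 1) ≃ₐ[ℂ] C ⊗[ℂ] TP n) :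
    ∀ n, (ℕ → C) → TP n
  | 0, f => e0.symm (f 0)
  | n + 1, f => (eS n).symm (f 0 ⊗ₜ[ℂ] pureTensor e0 eS n (fun i => f (i + 1)))

section IteratedCoproduct

variable {C : Type*} [Ring C] [Algebra ℂ C] {TP : ℕ → Type*}
  [∀ n, Ring (TP n)] [∀ n, Algebra ℂ (TP n)]
  (e0 : TP 0 ≃ₐ[ℂ] C) (eS : ∀ n, TP (n + 1) ≃ₐ[ℂ] C ⊗[ℂ] TP n)

theorem apply_pureTensor_zero (f : ℕ → C) : e0 (pureTensor e0 eS 0 f) = f 0 := by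
  simp [pureTensor]

theorem apply_pureTensor_succ (n : ℕ) (f : ℕ → C) :
    eS n (pureTensor e0 eS (n + 1) f) = f 0 ⊗ₜ[ℂ] pureTensor e0 eS n (fun i => f (i + 1)) := by
  simp [pureTensor]

variable {Δ : C →ₐ[ℂ] C ⊗[ℂ] C} {D : ∀ n, C →ₐ[ℂ] TP n}
  (hD0 : ∀ x : C, e0 (D 0 x) = x)
  (hDsucc : ∀ (n : ℕ) (x : C), eS n (D (n + 1) x) =
    (Algebra.TensorProduct.map (AlgHom.id ℂ C) (D n)) (Δ x))
include hD0 hDsucc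

theorem iterCoproduct_grouplike_eq_pureTensor {T : C} (hT : Δ T = T ⊗ₜ[ℂ] T) (n : ℕ) :
    D n T = pureTensor e0 eS n (fun _ => T) := by
  induction n with
  | zero => exact e0.injective (by rw [hD0, apply_pureTensor_zero])
  | succ n ih =>
    apply (eS n).injective
    rw [hDsucc, hT, apply_pureTensor_succ, Algebra.TensorProduct.map_tmul, ih]
    rfl

theorem iterCoproduct_skewPrimitive_eq_sum_pureTensor {T d : C} (hT : Δ T = T ⊗ₜ[ℂ] T)
    (hd : Δ d = d ⊗ₜ[ℂ] T + T ⊗ₜ[ℂ] d) (n : ℕ) :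
    D n d = ∑ i ∈ Finset.range (n + 1),
      pureTensor e0 eS n (fun l => if l = i then d else T) := by
  induction n with
  | zero => exact e0.injective (by simp [hD0, apply_pureTensor_zero])
  | succ n ih =>
    apply (eS n).injective
    rw [hDsucc, hd, map_add, Algebra.TensorProduct.map_tmul, Algebra.TensorProduct.map_tmul,
      ih, iterCoproduct_grouplike_eq_pureTensor e0 eS hD0 hDsucc hT, map_sum, Finset.sum_range_succ' _ (n + 1),
      TensorProduct.tmul_sum, add_comm]
    simp [apply_pureTensor_succ]

end IteratedCoproduct

theorem map_list_prod_of_grouplike {R C : Type*} [CommSemiring R] [Semiring C] [Algebra R C]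
    {Δ : C →ₐ[R] C ⊗[R] C} {l : List C} (h : ∀ x ∈ l, Δ x = x ⊗ₜ[R] x) :
    Δ l.prod = l.prod ⊗ₜ[R] l.prod := by
  induction l with
  | nil => simp [Algebra.TensorProduct.one_def]
  | cons a l ih =>
    rw [List.forall_mem_cons] at h
    rw [List.prod_cons, map_mul, h.1, ih h.2, Algebra.TensorProduct.tmul_mul_tmul]

theorem map_ordProd_of_grouplike {R C : Type*} [CommSemiring R] [Semiring C] [Algebra R C]
    {Δ : C →ₐ[R] C ⊗[R] C} {f : ℕ → C} {k m : ℕ}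
    (h : ∀ l, k ≤ l → l ≤ m → Δ (f l) = f l ⊗ₜ[R] f l) :
    Δ (ordProd f k m) = ordProd f k m ⊗ₜ[R] ordProd f k m := by
  refine map_list_prod_of_grouplike fun x hx => ?_
  obtain ⟨l, hl, rfl⟩ := List.mem_map.mp hx
  rw [List.mem_range'_1] at hl
  exact h l (by omega) (by omega)

theorem sum_Icc_embSite_sub {T R : Type*} [Ring T] (e : ℕ → R → T) {m : ℕ} (hm : 1 ≤ m)
    (x : R) :
    ∑ k ∈ Finset.Icc 1 m, (embSite e m k x - embSite e m (k + 1) x) = e 1 x := by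
  calc ∑ k ∈ Finset.Icc 1 m, (embSite e m k x - embSite e m (k + 1) x)
      = -∑ k ∈ Finset.Icc 1 m, (embSite e m (k + 1) x - embSite e m k x) := by
        simp only [← Finset.sum_neg_distrib, neg_sub]
    _ = embSite e m 1 x - embSite e m (m + 1) x := by
        rw [Finset.sum_Icc_sub hm (fun k => embSite e m k x), neg_sub]
    _ = e 1 x := by simp [embSite, hm]

/- `A` is the unital free *-algebra `𝒜` with generating set `G`; `B = 𝒜̃ = 𝒜 * ℂ[t]`
with canonical embedding `ι` and hermitian separator `tB`; `C = 𝒜̃^{*(m)}` is the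
`m`-fold free product of `𝒜̃` (units identified), with the canonical embeddings
`emb k : 𝒜̃ → C` of the copies `k = 1, …, m`; thus `a_{(k)} = emb k (ι a)`,
`t_{(k)} = emb k tB` and `t_{[k,m]} = t_{(k)} ⋯ t_{(m)}`. -/
theorem iterated_coproduct_formula_general
    {A B C : Type*}
    [Ring A] [Algebra ℂ A] [StarRing A]
    [Ring B] [Algebra ℂ B] [StarRing B]
    [Ring C] [Algebra ℂ C] [StarRing C]
    (G : Set A) (hA : Algebra.adjoin ℂ G = ⊤)
    (ι : A →⋆ₐ[ℂ] B) (tB : B)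
    (m : ℕ) (hm : 1 ≤ m)
    (emb : ℕ → B →⋆ₐ[ℂ] C)
    -- the coproduct `Δ^{(m)}`, with
    -- `Δ^{(m)}(t_{(k)}) = t_{(k)} ⊗ t_{(k)}`,
    -- `Δ^{(m)}(a_{(k)} - a_{(k+1)}) = (a_{(k)} - a_{(k+1)}) ⊗ t_{[k,m]}
    --                                   + t_{[k,m]} ⊗ (a_{(k)} - a_{(k+1)})`,
    (Δ : C →ₐ[ℂ] C ⊗[ℂ] C)
    (hΔt : ∀ k, 1 ≤ k → k ≤ m → Δ (emb k tB) = emb k tB ⊗ₜ[ℂ] emb k tB)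
    (hΔa : ∀ a ∈ G, ∀ k, 1 ≤ k → k ≤ m →
      Δ (embSite (fun l x => emb l (ι x)) m k a - embSite (fun l x => emb l (ι x)) m (k + 1) a) =
        (embSite (fun l x => emb l (ι x)) m k a - embSite (fun l x => emb l (ι x)) m (k + 1) a)
            ⊗ₜ[ℂ] ordProd (fun l => emb l tB) k m +
          ordProd (fun l => emb l tB) k m ⊗ₜ[ℂ]
            (embSite (fun l x => emb l (ι x)) m k a - embSite (fun l x => emb l (ι x)) m (k + 1) a))
    -- the iterated tensor powers `TP n` (with `n+1` factors) of `C = 𝒜̃^{*(m)}`, and the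
    -- iterated coproducts `D n = Δ_n^{(m)}`, with `Δ_0 = id`,
    -- `Δ_k^{(m)} = (id ⊗ Δ_{k-1}^{(m)}) ∘ Δ^{(m)}`
    {TP : ℕ → Type*} [∀ n, Ring (TP n)] [∀ n, Algebra ℂ (TP n)]
    (e0 : TP 0 ≃ₐ[ℂ] C) (eS : ∀ n, TP (n + 1) ≃ₐ[ℂ] C ⊗[ℂ] TP n)
    (D : ∀ n, C →ₐ[ℂ] TP n)
    (hD0 : ∀ x : C, e0 (D 0 x) = x)
    (hDsucc : ∀ (n : ℕ) (x : C), eS n (D (n + 1) x) =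
      (Algebra.TensorProduct.map (AlgHom.id ℂ C) (D n)) (Δ x))
    -- the `N`-fold free product `FN = 𝒜 * ⋯ * 𝒜` with embeddings `κN i` (`i = 0, …, N-1`),
    -- the map `δ_N(a) = a^{(1)} + ⋯ + a^{(N)}`, and the *-homomorphism
    -- `ĵ_N^{(m)} : FN → (𝒜̃^{*(m)})^{⊗N}` given on the generators of the `i`-th factor by
    -- `ĵ_{i,N}^{(m)}(a) = Σ_{k=1}^m t_{[k,m]}^{⊗(i-1)} ⊗ (a_{(k)} - a_{(k+1)}) ⊗ t_{[k,m]}^{⊗(N-i)}`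
    (N : ℕ) (hN : 2 ≤ N)
    {FN : Type*} [Ring FN] [Algebra ℂ FN] [StarRing FN]
    (κN : ℕ → (A →⋆ₐ[ℂ] FN))
    (δN : A →⋆ₐ[ℂ] FN) (hδN : ∀ a ∈ G, δN a = ∑ i ∈ Finset.range N, κN i a)
    (jN : FN →ₐ[ℂ] TP (N - 1))
    (hjN : ∀ i < N, ∀ a ∈ G, jN (κN i a) = ∑ k ∈ Finset.Icc 1 m,
      pureTensor e0 eS (N - 1) (fun l => if l = i
        then embSite (fun l' x => emb l' (ι x)) m k a - embSite (fun l' x => emb l' (ι x)) m (k + 1) a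
        else ordProd (fun l' => emb l' tB) k m)) :
    -- `ĵ_N^{(m)} ∘ δ_N = Δ_{N-1}^{(m)} ∘ î₁`
    ∀ x : A, jN (δN x) = D (N - 1) (emb 1 (ι x)) := by
  intro x
  have hgen : Set.EqOn (jN.comp δN.toAlgHom)
      ((D (N - 1)).comp ((emb 1).toAlgHom.comp ι.toAlgHom)) G := by
    intro a ha
    have htel := sum_Icc_embSite_sub (fun l x => emb l (ι x)) hm a
    simp only [AlgHom.comp_apply, StarAlgHom.coe_toAlgHom]
    rw [hδN a ha, map_sum, Finset.sum_congr rfl fun i hi => hjN i (Finset.mem_range.mp hi) a ha,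
      Finset.sum_comm, ← htel, map_sum]
    refine Finset.sum_congr rfl fun k hk => ?_
    obtain ⟨hk1, hkm⟩ := Finset.mem_Icc.mp hk
    rw [iterCoproduct_skewPrimitive_eq_sum_pureTensor e0 eS hD0 hDsucc
      (map_ordProd_of_grouplike fun l h1 h2 => hΔt l (by omega) h2) (hΔa a ha k hk1 hkm),
      Nat.sub_add_cancel (by omega : 1 ≤ N)]
  exact DFunLike.congr_fun (AlgHom.ext_of_adjoin_eq_top hA hgen) x

theorem iterated_coproduct_formula
    {A B C : Type*}
    [Ring A] [Algebra ℂ A] [StarRing A] [StarModule ℂ A]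
    [Ring B] [Algebra ℂ B] [StarRing B] [StarModule ℂ B]
    [Ring C] [Algebra ℂ C] [StarRing C] [StarModule ℂ C]
    (G : Set A) (hG : ∀ x ∈ G, star x ∈ G) (hA : Algebra.adjoin ℂ G = ⊤)
    (ι : A →⋆ₐ[ℂ] B) (tB : B) (htB : star tB = tB)
    (hB : Algebra.adjoin ℂ (Set.range ι ∪ {tB}) = ⊤)
    (m : ℕ) (hm : 1 ≤ m)
    (emb : ℕ → B →⋆ₐ[ℂ] C)
    (hC : Algebra.adjoin ℂ {x : C | ∃ k, 1 ≤ k ∧ k ≤ m ∧ ∃ b : B, x = emb k b} = ⊤)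
    -- the coproduct `Δ^{(m)}`, with
    -- `Δ^{(m)}(t_{(k)}) = t_{(k)} ⊗ t_{(k)}`,
    -- `Δ^{(m)}(a_{(k)} - a_{(k+1)}) = (a_{(k)} - a_{(k+1)}) ⊗ t_{[k,m]}
    --                                   + t_{[k,m]} ⊗ (a_{(k)} - a_{(k+1)})`,
    (Δ : C →ₐ[ℂ] C ⊗[ℂ] C)
    (hΔt : ∀ k, 1 ≤ k → k ≤ m → Δ (emb k tB) = emb k tB ⊗ₜ[ℂ] emb k tB)
    (hΔa : ∀ a ∈ G, ∀ k, 1 ≤ k → k ≤ m →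
      Δ (embSite (fun l x => emb l (ι x)) m k a - embSite (fun l x => emb l (ι x)) m (k + 1) a) =
        (embSite (fun l x => emb l (ι x)) m k a - embSite (fun l x => emb l (ι x)) m (k + 1) a)
            ⊗ₜ[ℂ] ordProd (fun l => emb l tB) k m +
          ordProd (fun l => emb l tB) k m ⊗ₜ[ℂ]
            (embSite (fun l x => emb l (ι x)) m k a - embSite (fun l x => emb l (ι x)) m (k + 1) a))
    -- the iterated tensor powers `TP n` (with `n+1` factors) of `C = 𝒜̃^{*(m)}`, and the
    -- iterated coproducts `D n = Δ_n^{(m)}`, with `Δ_0 = id`,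
    -- `Δ_k^{(m)} = (id ⊗ Δ_{k-1}^{(m)}) ∘ Δ^{(m)}`
    {TP : ℕ → Type*} [∀ n, Ring (TP n)] [∀ n, Algebra ℂ (TP n)]
    (e0 : TP 0 ≃ₐ[ℂ] C) (eS : ∀ n, TP (n + 1) ≃ₐ[ℂ] C ⊗[ℂ] TP n)
    (D : ∀ n, C →ₐ[ℂ] TP n)
    (hD0 : ∀ x : C, e0 (D 0 x) = x)
    (hDsucc : ∀ (n : ℕ) (x : C), eS n (D (n + 1) x) =
      (Algebra.TensorProduct.map (AlgHom.id ℂ C) (D n)) (Δ x))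
    -- the `N`-fold free product `FN = 𝒜 * ⋯ * 𝒜` with embeddings `κN i` (`i = 0, …, N-1`),
    -- the map `δ_N(a) = a^{(1)} + ⋯ + a^{(N)}`, and the *-homomorphism
    -- `ĵ_N^{(m)} : FN → (𝒜̃^{*(m)})^{⊗N}` given on the generators of the `i`-th factor by
    -- `ĵ_{i,N}^{(m)}(a) = Σ_{k=1}^m t_{[k,m]}^{⊗(i-1)} ⊗ (a_{(k)} - a_{(k+1)}) ⊗ t_{[k,m]}^{⊗(N-i)}`
    (N : ℕ) (hN : 2 ≤ N)
    {FN : Type*} [Ring FN] [Algebra ℂ FN] [StarRing FN] [StarModule ℂ FN]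
    (κN : ℕ → (A →⋆ₐ[ℂ] FN))
    (hFN : Algebra.adjoin ℂ {x : FN | ∃ i < N, ∃ a : A, x = κN i a} = ⊤)
    (δN : A →⋆ₐ[ℂ] FN) (hδN : ∀ a ∈ G, δN a = ∑ i ∈ Finset.range N, κN i a)
    (jN : FN →ₐ[ℂ] TP (N - 1))
    (hjN : ∀ i < N, ∀ a ∈ G, jN (κN i a) = ∑ k ∈ Finset.Icc 1 m,
      pureTensor e0 eS (N - 1) (fun l => if l = i
        then embSite (fun l' x => emb l' (ι x)) m k a - embSite (fun l' x => emb l' (ι x)) m (k + 1) a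
        else ordProd (fun l' => emb l' tB) k m)) :
    -- `ĵ_N^{(m)} ∘ δ_N = Δ_{N-1}^{(m)} ∘ î₁`
    ∀ x : A, jN (δN x) = D (N - 1) (emb 1 (ι x)) :=
  iterated_coproduct_formula_general G hA ι tB m hm emb Δ hΔt hΔa e0 eS D hD0 hDsucc N hN κN δN hδN
    jN hjN
end
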